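/- arXiv:1310.0192 — 3 statements merged into one kernel-verified Lean document; each statement's English description precedes it below -/
import Mathlib

section
/- Let x solve x'(t) = F(y(t), x(t)) with continuous forcing y ≥ 0 and nonnegative initial condition. If y(0) > 0 or x₂(0) > 0, then x_k(t) > 0 for every k ∈ {0, 2, 3, …, K} and every t > 0. -/
open Set Filter

/-- `IsSol K γ y a x`: `x = (x₀, x₂, …, x_{K+1})` solves `x' = F(y, x)` on `[0,∞)`
with `x(0) = a` (components indexed by `{0, 2, …, K+1}`, convention `x₁ := y`). -/
def IsSol (K : ℕ) (γ : ℕ → ℝ) (y : ℝ → ℝ) (a : ℕ → ℝ) (x : ℕ → ℝ → ℝ) : Prop :=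
  (∀ k, x k 0 = a k) ∧
  (∀ t ∈ Ici (0:ℝ), HasDerivWithinAt (x 0) (x K t) (Ici 0) t) ∧
  (∀ t ∈ Ici (0:ℝ), HasDerivWithinAt (x (K+1)) (x K t) (Ici 0) t) ∧
  (∀ k, 2 ≤ k → k ≤ K → ∀ t ∈ Ici (0:ℝ),
    HasDerivWithinAt (x k)
      ((if k = 2 then y t else x (k-1) t) + (γ k - x 0 t) * x k t) (Ici 0) t)

open Topology

/-! Solutions of `x' = F(y, x)` are positive: each `xₖ` solves a scalar linear equation
`u' = f + g u` whose forcing `f` (`y` for `k = 2`, `xₖ₋₁` after) is nonnegative. Multiplying by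
the integrating factor `exp (-∫₀ᵗ g)` turns `u` into a monotone function `w` with `w' = f e^{-∫g}`,
so `u` stays positive once it is positive, and becomes positive right after any time where `f` is
(there `w` has a positive right derivative, so no continuity of `f` is needed). Positivity therefore propagates along the chain `x₂ → x₃ → ⋯ → x_K → x₀`. -/

lemma ContinuousOn.exists_hasDerivWithinAt_Ici {g : ℝ → ℝ} {a : ℝ} (hg : ContinuousOn g (Ici a)) :
    ∃ G : ℝ → ℝ, ∀ t ∈ Ici a, HasDerivWithinAt G (g t) (Ici a) t := by
  have hc : Continuous fun s => g (max a s) :=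
    hg.comp_continuous (continuous_const.max continuous_id) fun s => le_max_left a s
  refine ⟨fun t => ∫ s in a..t, g (max a s), fun t ht => ?_⟩
  simpa [max_eq_right (mem_Ici.1 ht)] using
    (hc.integral_hasStrictDerivAt a t).hasDerivAt.hasDerivWithinAt

lemma monotoneOn_Ici_of_hasDerivWithinAt_nonneg {w w' : ℝ → ℝ} {a : ℝ}
    (hw : ∀ t ∈ Ici a, HasDerivWithinAt w (w' t) (Ici a) t) (hw' : ∀ t ∈ Ici a, 0 ≤ w' t) :
    MonotoneOn w (Ici a) :=
  monotoneOn_of_hasDerivWithinAt_nonneg (convex_Ici a)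
    (fun t ht => (hw t ht).continuousWithinAt)
    (fun t ht => (hw t (interior_subset ht)).mono interior_subset)
    (fun t ht => hw' t (interior_subset ht))

lemma MonotoneOn.lt_of_hasDerivWithinAt_pos {w : ℝ → ℝ} {d r t : ℝ} (hw : MonotoneOn w (Ici r))
    (hd : HasDerivWithinAt w d (Ici r) r) (hd0 : 0 < d) (hrt : r < t) : w r < w t := by
  have hslope : Tendsto (slope w r) (𝓝[>] r) (𝓝 d) :=
    (hasDerivWithinAt_iff_tendsto_slope' (lt_irrefl r)).1 (hasDerivWithinAt_Ioi_iff_Ici.2 hd)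
  obtain ⟨s, hs_pos, hrs, hst⟩ : ∃ s, 0 < slope w r s ∧ r < s ∧ s < t :=
    ((hslope.eventually (eventually_gt_nhds hd0)).and (Ioo_mem_nhdsGT hrt)).exists
  have hws : w r < w s := by
    rw [slope_def_field] at hs_pos
    exact sub_pos.1 ((div_pos_iff_of_pos_right (sub_pos.2 hrs)).1 hs_pos)
  exact hws.trans_le (hw (mem_Ici.2 hrs.le) (mem_Ici.2 (hrs.trans hst).le) hst.le)

def SolvesLinearODE (u f g : ℝ → ℝ) : Prop :=
  ∀ t ∈ Ici (0:ℝ), HasDerivWithinAt u (f t + g t * u t) (Ici 0) t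

namespace SolvesLinearODE

variable {u f g : ℝ → ℝ}

lemma exists_integratingFactor (hu : SolvesLinearODE u f g) (hg : ContinuousOn g (Ici 0)) :
    ∃ v : ℝ → ℝ, (∀ t, 0 < v t) ∧
      ∀ t ∈ Ici (0:ℝ), HasDerivWithinAt (fun s => u s * v s) (f t * v t) (Ici 0) t := by
  obtain ⟨G, hG⟩ := hg.exists_hasDerivWithinAt_Ici
  refine ⟨fun t => Real.exp (-G t), fun t => Real.exp_pos _, fun t ht => ?_⟩
  exact ((hu t ht).mul (hG t ht).neg.exp).congr_deriv (by rw [Pi.neg_apply]; ring)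

variable (hu : SolvesLinearODE u f g) (hg : ContinuousOn g (Ici 0))
include hu hg

lemma pos_of_pos_zero (hf : ∀ t ∈ Ici (0:ℝ), 0 ≤ f t) (hu0 : 0 < u 0) {t : ℝ} (ht : 0 ≤ t) :
    0 < u t := by
  obtain ⟨v, hv, hw⟩ := hu.exists_integratingFactor hg
  have hmono := monotoneOn_Ici_of_hasDerivWithinAt_nonneg hw
    fun s hs => mul_nonneg (hf s hs) (hv s).le
  have hwt : 0 < u t * v t := (mul_pos hu0 (hv 0)).trans_le (hmono self_mem_Ici ht ht)
  exact pos_of_mul_pos_left hwt (hv t).le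

lemma pos_of_forcing_pos (hf : ∀ t ∈ Ici (0:ℝ), 0 ≤ f t) (hu0 : 0 ≤ u 0) {r t : ℝ} (hr : 0 ≤ r)
    (hfr : 0 < f r) (hrt : r < t) : 0 < u t := by
  obtain ⟨v, hv, hw⟩ := hu.exists_integratingFactor hg
  have hmono := monotoneOn_Ici_of_hasDerivWithinAt_nonneg hw
    fun s hs => mul_nonneg (hf s hs) (hv s).le
  have hwr : 0 ≤ u r * v r := (mul_nonneg hu0 (hv 0).le).trans (hmono self_mem_Ici hr hr)
  have hwrt : u r * v r < u t * v t :=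
    (hmono.mono (Ici_subset_Ici.2 hr)).lt_of_hasDerivWithinAt_pos
      ((hw r hr).mono (Ici_subset_Ici.2 hr)) (mul_pos hfr (hv r)) hrt
  exact pos_of_mul_pos_left (hwr.trans_lt hwrt) (hv t).le

lemma pos_of_forcing_pos_Ioi (hf0 : 0 ≤ f 0) (hf : ∀ t > 0, 0 < f t) (hu0 : 0 ≤ u 0) :
    ∀ t > 0, 0 < u t := by
  have hf_nonneg : ∀ s ∈ Ici (0:ℝ), 0 ≤ f s := fun s hs =>
    (eq_or_lt_of_le (mem_Ici.1 hs)).elim (fun h => h ▸ hf0) fun h => (hf s h).le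
  intro t ht
  exact hu.pos_of_forcing_pos hg hf_nonneg hu0 (half_pos ht).le (hf _ (half_pos ht))
    (half_lt_self ht)

end SolvesLinearODE

theorem ode_positivity_general (K : ℕ) (hK : 2 ≤ K) (γ : ℕ → ℝ)
    (y : ℝ → ℝ) (hy : ∀ t ≥ (0:ℝ), 0 ≤ y t)
    (a : ℕ → ℝ) (ha : ∀ k, 0 ≤ a k)
    (x : ℕ → ℝ → ℝ) (hx : IsSol K γ y a x)
    (hpos : 0 < y 0 ∨ 0 < x 2 0) :
    ∀ k, (k = 0 ∨ (2 ≤ k ∧ k ≤ K)) → ∀ t > (0:ℝ), 0 < x k t := by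
  obtain ⟨hx_init, hx0, -, hxk⟩ := hx
  have hx_init_nonneg : ∀ k, 0 ≤ x k 0 := fun k => hx_init k ▸ ha k
  have hcoeff : ∀ k, ContinuousOn (fun t => γ k - x 0 t) (Ici 0) := fun k =>
    continuousOn_const.sub fun t ht => (hx0 t ht).continuousWithinAt
  have hchain : ∀ k, 2 ≤ k → k ≤ K → ∀ t > (0:ℝ), 0 < x k t := by
    intro k hk
    induction k, hk using Nat.le_induction with
    | base =>
      intro _ t ht
      have hsol : SolvesLinearODE (x 2) y (fun t => γ 2 - x 0 t) := by
        simpa [SolvesLinearODE] using hxk 2 le_rfl hK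
      rcases hpos with hy0 | hx20
      · exact hsol.pos_of_forcing_pos (hcoeff 2) hy (hx_init_nonneg 2) le_rfl hy0 ht
      · exact hsol.pos_of_pos_zero (hcoeff 2) hy hx20 ht.le
    | succ k hk ih =>
      intro hkK
      have hsol : SolvesLinearODE (x (k + 1)) (x k) (fun t => γ (k + 1) - x 0 t) := by
        simpa [show k + 1 ≠ 2 by omega, SolvesLinearODE] using hxk (k + 1) (by omega) hkK
      exact hsol.pos_of_forcing_pos_Ioi (hcoeff _) (hx_init_nonneg k) (ih (by omega))
        (hx_init_nonneg _)
  rintro k (rfl | ⟨hk, hkK⟩)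
  · have hsol : SolvesLinearODE (x 0) (x K) 0 := by simpa [SolvesLinearODE] using hx0
    exact hsol.pos_of_forcing_pos_Ioi continuousOn_const (hx_init_nonneg K) (hchain K hK le_rfl)
      (hx_init_nonneg 0)
  · exact hchain k hk hkK

/-- If `y(0) > 0` or `x₂(0) > 0`, then `x_k(t) > 0` for every
`k ∈ {0, 2, 3, …, K}` and every `t > 0`. -/
theorem ode_positivity (K : ℕ) (hK : 2 ≤ K) (γ : ℕ → ℝ)
    (y : ℝ → ℝ) (hyc : Continuous y) (hy : ∀ t ≥ (0:ℝ), 0 ≤ y t)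
    (a : ℕ → ℝ) (ha : ∀ k, 0 ≤ a k)
    (x : ℕ → ℝ → ℝ) (hx : IsSol K γ y a x)
    (hpos : 0 < y 0 ∨ 0 < x 2 0) :
    ∀ k, (k = 0 ∨ (2 ≤ k ∧ k ≤ K)) → ∀ t > (0:ℝ), 0 < x k t :=
  ode_positivity_general K hK γ y hy a ha x hx hpos
end

section
/- Let x solve x'(t) = F(y(t), x(t)) with continuous forcing y ≥ 0 and nonnegative initial condition, and suppose x_k(t) > 0 for all k = 2,…,K and t > 0, and that x₀ is bounded. Then ∫₀^∞ y(u) du < ∞, ∫₀^∞ x_k(u) du < ∞ for every k = 2,…,K, and the limit x₀(∞) satisfies x₀(∞) > γ_k for every k = 2,…,K. -/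
open Set Filter MeasureTheory

open Topology

/-!
`x₀` is nondecreasing (`x₀' = x_K ≥ 0`) and bounded, so it converges to some `L` and
`∫₀^∞ x_K = L - x₀(0) < ∞`. In `x_k' = x_{k-1} + (γ_k - x₀) x_k` the coefficient is bounded, so
integrating up to the (arbitrarily large) times at which `x_k` is small bounds `∫ x_{k-1}` by
`∫ |(γ_k - x₀) x_k|`: integrability descends from `x_K` to `x₁ = y`. Finally, if `γ_k ≥ L` the
coefficient is nonnegative, so `x_k` is nondecreasing and positive, hence not integrable.
-/

section HalfLine

variable {a : ℝ}

theorem integral_eq_sub_of_hasDerivWithinAt_Ici {f f' : ℝ → ℝ}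
    (hd : ∀ t ∈ Ici a, HasDerivWithinAt f (f' t) (Ici a) t) (hf' : ContinuousOn f' (Ici a))
    {T : ℝ} (hT : a ≤ T) : ∫ t in a..T, f' t = f T - f a :=
  intervalIntegral.integral_eq_sub_of_hasDeriv_right_of_le hT
    (fun t ht => (hd t ht.1).continuousWithinAt.mono Icc_subset_Ici_self)
    (fun t ht => (hd t ht.1.le).mono (Ioi_subset_Ici ht.1.le))
    ((hf'.mono Icc_subset_Ici_self).intervalIntegrable_of_Icc hT)

theorem monotoneOn_Ici_of_hasDerivWithinAt_nonneg_s4 {f f' : ℝ → ℝ}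
    (hd : ∀ t ∈ Ici a, HasDerivWithinAt f (f' t) (Ici a) t) (hf' : ∀ t ∈ Ioi a, 0 ≤ f' t) :
    MonotoneOn f (Ici a) := by
  refine monotoneOn_of_hasDerivWithinAt_nonneg (convex_Ici a)
    (fun t ht => (hd t ht).continuousWithinAt) ?_ (by rwa [interior_Ici])
  rw [interior_Ici]
  exact fun t ht => (hd t (Ioi_subset_Ici_self ht)).mono Ioi_subset_Ici_self

theorem MonotoneOn.exists_tendsto_atTop_of_le {f : ℝ → ℝ} (hf : MonotoneOn f (Ici a)) {M : ℝ}
    (hM : ∀ t ≥ a, f t ≤ M) : ∃ L, Tendsto f atTop (𝓝 L) ∧ ∀ t ≥ a, f t ≤ L := by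
  set g : ℝ → ℝ := fun t => f (max t a)
  have hg : Monotone g := fun s t hst =>
    hf (le_max_right s a) (le_max_right t a) (max_le_max hst le_rfl)
  have hgM : BddAbove (range g) := ⟨M, by rintro _ ⟨t, rfl⟩; exact hM _ (le_max_right t a)⟩
  have hfg : ∀ t ≥ a, f t = g t := fun t ht => by simp [g, max_eq_left ht]
  refine ⟨⨆ t, g t, (tendsto_atTop_ciSup hg hgM).congr' ?_, fun t ht => ?_⟩
  · filter_upwards [eventually_ge_atTop a] with t ht using (hfg t ht).symm
  · exact (hfg t ht).trans_le (le_ciSup hgM t)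

theorem frequently_lt_of_integrableOn_Ici {f : ℝ → ℝ} (hf : IntegrableOn f (Ici a)) {ε : ℝ}
    (hε : 0 < ε) : ∃ᶠ t in atTop, f t < ε := by
  by_contra h
  obtain ⟨T, hT⟩ := eventually_atTop.1 (not_frequently.1 h)
  have hconst : IntegrableOn (fun _ => ε) (Ici (max T a)) := by
    refine Integrable.mono' (hf.mono_set (Ici_subset_Ici.2 (le_max_right T a)))
      aestronglyMeasurable_const ((ae_restrict_iff' measurableSet_Ici).2 (ae_of_all _ ?_))
    intro t ht
    rw [Real.norm_of_nonneg hε.le]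
    exact not_lt.1 (hT t ((le_max_left T a).trans ht))
  simp [integrableOn_const_iff, hε.ne'] at hconst

theorem MonotoneOn.not_integrableOn_Ici {f : ℝ → ℝ} (hf : MonotoneOn f (Ici a)) {b : ℝ}
    (hb : a ≤ b) (hfb : 0 < f b) : ¬ IntegrableOn f (Ici a) := fun hint =>
  have ⟨_, hft, hbt⟩ :=
    ((frequently_lt_of_integrableOn_Ici hint hfb).and_eventually (eventually_ge_atTop b)).exists
  (hft.trans_le (hf hb (hb.trans hbt) hbt)).false

theorem integrableOn_Ici_of_frequently_intervalIntegral_le {u : ℝ → ℝ}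
    (hu : ContinuousOn u (Ici a)) (hu0 : ∀ t ∈ Ici a, 0 ≤ u t) {M : ℝ}
    (hM : ∃ᶠ T in atTop, ∫ t in a..T, u t ≤ M) : IntegrableOn u (Ici a) := by
  rw [integrableOn_Ici_iff_integrableOn_Ioi]
  refine integrableOn_Ioi_of_intervalIntegral_norm_bounded M a
    (fun T => ((hu.mono Icc_subset_Ici_self).integrableOn_Icc).mono_set Ioc_subset_Icc_self)
    tendsto_id ?_
  filter_upwards [eventually_ge_atTop a] with T hT
  obtain ⟨t, ht, hTt⟩ := (hM.and_eventually (eventually_ge_atTop T)).exists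
  calc ∫ s in a..T, ‖u s‖ = ∫ s in a..T, u s :=
        intervalIntegral.integral_congr fun s hs =>
          Real.norm_of_nonneg (hu0 s (by rw [uIcc_of_le hT] at hs; exact hs.1))
    _ ≤ ∫ s in a..t, u s :=
        intervalIntegral.integral_mono_interval le_rfl hT hTt
          ((ae_restrict_iff' measurableSet_Ioc).2 (ae_of_all _ fun s hs => hu0 s hs.1.le))
          ((hu.mono Icc_subset_Ici_self).intervalIntegrable_of_Icc (hT.trans hTt))
    _ ≤ M := ht

theorem integrableOn_Ici_of_hasDerivWithinAt_add_mul {f u p : ℝ → ℝ}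
    (hd : ∀ t ∈ Ici a, HasDerivWithinAt f (u t + p t * f t) (Ici a) t)
    (hu : ContinuousOn u (Ici a)) (hu0 : ∀ t ∈ Ici a, 0 ≤ u t)
    (hp : ContinuousOn p (Ici a)) {C : ℝ} (hC : ∀ t ∈ Ici a, |p t| ≤ C)
    (hf : IntegrableOn f (Ici a)) : IntegrableOn u (Ici a) := by
  set g : ℝ → ℝ := fun t => p t * f t
  have hgc : ContinuousOn g (Ici a) := hp.mul fun t ht => (hd t ht).continuousWithinAt
  have hg : IntegrableOn g (Ici a) := hf.bdd_mul (hp.aestronglyMeasurable measurableSet_Ici)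
    ((ae_restrict_iff' measurableSet_Ici).2 (ae_of_all _ hC))
  refine integrableOn_Ici_of_frequently_intervalIntegral_le hu hu0
    (M := 1 - f a + ∫ t in Ici a, |g t|) ?_
  refine ((frequently_lt_of_integrableOn_Ici hf one_pos).and_eventually
    (eventually_ge_atTop a)).mono fun T ⟨hfT, hT⟩ => ?_
  have hftc : (∫ t in a..T, u t) + ∫ t in a..T, g t = f T - f a := by
    rw [← intervalIntegral.integral_add ((hu.mono Icc_subset_Ici_self).intervalIntegrable_of_Icc hT)
      ((hgc.mono Icc_subset_Ici_self).intervalIntegrable_of_Icc hT)]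
    exact integral_eq_sub_of_hasDerivWithinAt_Ici hd (hu.add hgc) hT
  have hgT : -∫ t in Ici a, |g t| ≤ ∫ t in a..T, g t := by
    refine neg_le.1 ((neg_le_abs _).trans ?_)
    calc |∫ t in a..T, g t| ≤ ∫ t in a..T, |g t| := intervalIntegral.abs_integral_le_integral_abs hT
      _ = ∫ t in Ioc a T, |g t| := intervalIntegral.integral_of_le hT
      _ ≤ ∫ t in Ici a, |g t| := setIntegral_mono_set hg.abs (ae_of_all _ fun t => abs_nonneg _)
          (Ioc_subset_Icc_self.trans Icc_subset_Ici_self).eventuallyLE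
  linarith

end HalfLine

def forcing (y : ℝ → ℝ) (x : ℕ → ℝ → ℝ) (k : ℕ) (t : ℝ) : ℝ :=
  if k = 2 then y t else x (k - 1) t

section Forcing

variable {y : ℝ → ℝ} {x : ℕ → ℝ → ℝ}

theorem forcing_two : forcing y x 2 = y := rfl

theorem forcing_succ {k : ℕ} (hk : 2 ≤ k) : forcing y x (k + 1) = x k := by
  ext t
  simp [forcing, show k + 1 ≠ 2 by omega]

theorem forcing_nonneg {K k : ℕ} (hy : ∀ t ≥ (0:ℝ), 0 ≤ y t)
    (hnn : ∀ k, 2 ≤ k → k ≤ K → ∀ t ∈ Ici (0:ℝ), 0 ≤ x k t) (h2 : 2 ≤ k) (hk : k ≤ K) :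
    ∀ t ∈ Ici (0:ℝ), 0 ≤ forcing y x k t := by
  rcases h2.eq_or_lt with rfl | h2
  · exact hy
  · obtain ⟨j, rfl⟩ : ∃ j, k = j + 1 := ⟨k - 1, by omega⟩
    rw [forcing_succ (by omega)]
    exact hnn j (by omega) (by omega)

end Forcing

namespace IsSol

variable {K : ℕ} {γ : ℕ → ℝ} {y : ℝ → ℝ} {a : ℕ → ℝ} {x : ℕ → ℝ → ℝ}

theorem hasDerivWithinAt_zero (hx : IsSol K γ y a x) :
    ∀ t ∈ Ici (0:ℝ), HasDerivWithinAt (x 0) (x K t) (Ici 0) t :=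
  hx.2.1

theorem hasDerivWithinAt {k : ℕ} (hx : IsSol K γ y a x) (h2 : 2 ≤ k) (hk : k ≤ K) :
    ∀ t ∈ Ici (0:ℝ), HasDerivWithinAt (x k) (forcing y x k t + (γ k - x 0 t) * x k t) (Ici 0) t :=
  hx.2.2.2 k h2 hk

theorem nonneg (hx : IsSol K γ y a x) (ha : ∀ k, 0 ≤ a k)
    (hpos : ∀ k, 2 ≤ k → k ≤ K → ∀ t > (0:ℝ), 0 < x k t) :
    ∀ k, 2 ≤ k → k ≤ K → ∀ t ∈ Ici (0:ℝ), 0 ≤ x k t := by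
  intro k h2 hk t ht
  rcases (mem_Ici.1 ht).eq_or_lt with rfl | h
  · exact hx.1 k ▸ ha k
  · exact (hpos k h2 hk t h).le

theorem continuousOn_zero (hx : IsSol K γ y a x) : ContinuousOn (x 0) (Ici 0) :=
  fun t ht => (hx.hasDerivWithinAt_zero t ht).continuousWithinAt

theorem continuousOn {k : ℕ} (hx : IsSol K γ y a x) (h2 : 2 ≤ k) (hk : k ≤ K) :
    ContinuousOn (x k) (Ici 0) :=
  fun t ht => (hx.hasDerivWithinAt h2 hk t ht).continuousWithinAt

theorem continuousOn_forcing {k : ℕ} (hx : IsSol K γ y a x) (hyc : Continuous y) (h2 : 2 ≤ k)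
    (hk : k ≤ K) : ContinuousOn (forcing y x k) (Ici 0) := by
  rcases h2.eq_or_lt with rfl | h2
  · exact hyc.continuousOn
  · obtain ⟨j, rfl⟩ : ∃ j, k = j + 1 := ⟨k - 1, by omega⟩
    rw [forcing_succ (by omega)]
    exact hx.continuousOn (by omega) (by omega)

theorem monotoneOn_zero (hx : IsSol K γ y a x) (hnn : ∀ t ∈ Ici (0:ℝ), 0 ≤ x K t) :
    MonotoneOn (x 0) (Ici 0) :=
  monotoneOn_Ici_of_hasDerivWithinAt_nonneg_s4 hx.hasDerivWithinAt_zero fun t ht =>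
    hnn t (Ioi_subset_Ici_self ht)

theorem integrableOn_last (hx : IsSol K γ y a x) (hK : 2 ≤ K)
    (hnn : ∀ t ∈ Ici (0:ℝ), 0 ≤ x K t) {M : ℝ} (hM : ∀ t ≥ (0:ℝ), x 0 t ≤ M) :
    IntegrableOn (x K) (Ici 0) := by
  refine integrableOn_Ici_of_frequently_intervalIntegral_le (hx.continuousOn hK le_rfl) hnn
    (M := M - x 0 0) (Eventually.frequently ?_)
  filter_upwards [eventually_ge_atTop 0] with T hT
  rw [integral_eq_sub_of_hasDerivWithinAt_Ici hx.hasDerivWithinAt_zero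
    (hx.continuousOn hK le_rfl) hT]
  linarith [hM T hT]

theorem integrableOn_forcing {k : ℕ} {L : ℝ} (hx : IsSol K γ y a x) (hyc : Continuous y)
    (hy : ∀ t ≥ (0:ℝ), 0 ≤ y t) (hnn : ∀ k, 2 ≤ k → k ≤ K → ∀ t ∈ Ici (0:ℝ), 0 ≤ x k t)
    (hmono : MonotoneOn (x 0) (Ici 0)) (hle : ∀ t ≥ (0:ℝ), x 0 t ≤ L) (h2 : 2 ≤ k) (hk : k ≤ K)
    (hint : IntegrableOn (x k) (Ici 0)) : IntegrableOn (forcing y x k) (Ici 0) := by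
  refine integrableOn_Ici_of_hasDerivWithinAt_add_mul (p := fun t => γ k - x 0 t)
    (hx.hasDerivWithinAt h2 hk) (hx.continuousOn_forcing hyc h2 hk) (forcing_nonneg hy hnn h2 hk)
    (continuousOn_const.sub hx.continuousOn_zero) (C := |γ k - x 0 0| + |γ k - L|) (fun t ht => ?_)
    hint
  have h0t : x 0 0 ≤ x 0 t := hmono self_mem_Ici ht ht
  have htL : x 0 t ≤ L := hle t ht
  rw [abs_le]
  constructor <;>
    linarith [le_abs_self (γ k - x 0 0), neg_abs_le (γ k - L), abs_nonneg (γ k - x 0 0),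
      abs_nonneg (γ k - L)]

theorem lt_of_integrableOn {k : ℕ} {L : ℝ} (hx : IsSol K γ y a x) (hy : ∀ t ≥ (0:ℝ), 0 ≤ y t)
    (hnn : ∀ k, 2 ≤ k → k ≤ K → ∀ t ∈ Ici (0:ℝ), 0 ≤ x k t)
    (hpos : ∀ t > (0:ℝ), 0 < x k t) (hle : ∀ t ≥ (0:ℝ), x 0 t ≤ L) (h2 : 2 ≤ k) (hk : k ≤ K)
    (hint : IntegrableOn (x k) (Ici 0)) : γ k < L := by
  by_contra! hL
  refine (monotoneOn_Ici_of_hasDerivWithinAt_nonneg_s4 (hx.hasDerivWithinAt h2 hk) fun t ht => ?_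
    ).not_integrableOn_Ici zero_le_one (hpos 1 one_pos) hint
  have ht : t ∈ Ici (0:ℝ) := Ioi_subset_Ici_self ht
  exact add_nonneg (forcing_nonneg hy hnn h2 hk t ht)
    (mul_nonneg (by linarith [hle t ht]) (hnn k h2 hk t ht))

end IsSol

/-- If `x_k(t) > 0` for all `2 ≤ k ≤ K` and `t > 0`, and `x₀` is bounded, then
`∫₀^∞ y < ∞`, `∫₀^∞ x_k < ∞` for every `2 ≤ k ≤ K`, and the (finite) limit
`x₀(∞)` satisfies `x₀(∞) > γ_k` for every `2 ≤ k ≤ K`. -/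
theorem ode_integrability (K : ℕ) (hK : 2 ≤ K) (γ : ℕ → ℝ)
    (y : ℝ → ℝ) (hyc : Continuous y) (hy : ∀ t ≥ (0:ℝ), 0 ≤ y t)
    (a : ℕ → ℝ) (ha : ∀ k, 0 ≤ a k)
    (x : ℕ → ℝ → ℝ) (hx : IsSol K γ y a x)
    (hpos : ∀ k, 2 ≤ k → k ≤ K → ∀ t > (0:ℝ), 0 < x k t)
    (hbdd : ∃ M : ℝ, ∀ t ≥ (0:ℝ), x 0 t ≤ M) :
    IntegrableOn y (Ici (0:ℝ)) ∧
    (∀ k, 2 ≤ k → k ≤ K → IntegrableOn (x k) (Ici (0:ℝ))) ∧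
    ∃ L : ℝ, Tendsto (x 0) atTop (nhds L) ∧ ∀ k, 2 ≤ k → k ≤ K → γ k < L := by
  obtain ⟨M, hM⟩ := hbdd
  have hnn := hx.nonneg ha hpos
  have hmono := hx.monotoneOn_zero (hnn K hK le_rfl)
  obtain ⟨L, hL, hle⟩ := hmono.exists_tendsto_atTop_of_le hM
  have hint : ∀ k, 2 ≤ k → k ≤ K → IntegrableOn (x k) (Ici 0) := by
    intro k h2 hk
    induction hk using Nat.decreasingInduction with
    | self => exact hx.integrableOn_last hK (hnn K hK le_rfl) hM
    | of_succ k hk ih =>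
      rw [← forcing_succ (y := y) (x := x) h2]
      exact hx.integrableOn_forcing hyc hy hnn hmono hle (by omega) hk (ih (by omega))
  refine ⟨?_, hint, L, hL, fun k h2 hk =>
    hx.lt_of_integrableOn hy hnn (hpos k h2 hk) hle h2 hk (hint k h2 hk)⟩
  rw [← forcing_two (y := y) (x := x)]
  exact hx.integrableOn_forcing hyc hy hnn hmono hle le_rfl hK (hint 2 le_rfl hK)
end

section
/- Let x solve x'(t) = F(0, x(t)) with nonnegative initial condition and define η_k = γ_{k-1} - γ_k for 3 ≤ k ≤ K, φ_{k,0}(t) = 1 and recursively φ_{k,i}(t) = ∫₀^t φ_{k-1,i-1}(u) e^{η_k u} du for 1 ≤ i ≤ k-2. Then for every k = 2,…,K and t ≥ 0, x_k(t) = (Σ_{i=0}^{k-2} x_{k-i}(0) φ_{k,i}(t)) · exp(-∫₀^t (x₀(u) - γ_k) du). -/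
open Set Filter intervalIntegral

/-- The functions `φ_{k,i}`: `φ_{k,0} = 1` and
`φ_{k,i}(t) = ∫₀ᵗ φ_{k-1,i-1}(u) e^{(γ_{k-1} - γ_k)u} du`. -/
noncomputable def phi (γ : ℕ → ℝ) : ℕ → ℕ → ℝ → ℝ
  | _, 0, _ => 1
  | k, (i+1), t =>
      ∫ u in (0:ℝ)..t, phi γ (k-1) i u * Real.exp ((γ (k-1) - γ k) * u)

/-! The integrating factor `e^{I_k}`, `I_k(t) = ∫₀ᵗ (x₀ - γ_k)`, turns `x_k' = x_{k-1} + (γ_k - x₀) x_k`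
into `(x_k e^{I_k})' = (x_{k-1} e^{I_{k-1}}) e^{(γ_{k-1} - γ_k) t}`. By induction on `k`,
`x_{k-1} e^{I_{k-1}} = Σᵢ x_{k-1-i}(0) φ_{k-1,i}`, and by the recursion defining `φ` the right-hand
side is then the derivative of `Σᵢ x_{k-i}(0) φ_{k,i}`. Both sides agree at `0`, hence on `[0,∞)`.
The forcing `y ≡ 0` plays the role of `x₁`, so the induction starts at `k = 1` with an empty sum. -/

open MeasureTheory Topology Real

theorem hasDerivWithinAt_integral_Ici {p : ℝ → ℝ} (hp : ContinuousOn p (Ici 0)) {t : ℝ}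
    (ht : 0 ≤ t) : HasDerivWithinAt (fun s => ∫ u in (0:ℝ)..s, p u) (p t) (Ici 0) t := by
  have hint : IntervalIntegrable p volume 0 t :=
    (hp.mono Icc_subset_Ici_self).intervalIntegrable_of_Icc ht
  rcases ht.eq_or_lt with rfl | ht
  · exact integral_hasDerivWithinAt_right hint
      ⟨Ici 0, mem_of_superset self_mem_nhdsWithin Ioi_subset_Ici_self,
        hp.aestronglyMeasurable measurableSet_Ici⟩
      ((hp 0 self_mem_Ici).mono Ioi_subset_Ici_self)
  · exact (integral_hasDerivAt_right hint
      ⟨Ici 0, Ici_mem_nhds ht, hp.aestronglyMeasurable measurableSet_Ici⟩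
      ((hp t ht.le).continuousAt (Ici_mem_nhds ht))).hasDerivWithinAt

theorem integral_sub_const_eq_add (p : ℝ → ℝ) {a b : ℝ} (hp : IntervalIntegrable p volume a b)
    (c c' : ℝ) :
    ∫ u in a..b, (p u - c) = (∫ u in a..b, (p u - c')) + (c' - c) * (b - a) := by
  rw [integral_sub hp intervalIntegrable_const, integral_sub hp intervalIntegrable_const]
  simp only [intervalIntegral.integral_const, smul_eq_mul]
  ring

/-- Variation of constants: `f e^I` and `S` have the same derivative `r e^I`. -/
theorem mul_exp_eq_of_hasDerivWithinAt {f r p I S : ℝ → ℝ}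
    (hf : ∀ t ∈ Ici (0:ℝ), HasDerivWithinAt f (r t - p t * f t) (Ici 0) t)
    (hI : ∀ t ∈ Ici (0:ℝ), HasDerivWithinAt I (p t) (Ici 0) t)
    (hS : ∀ t ∈ Ici (0:ℝ), HasDerivWithinAt S (r t * exp (I t)) (Ici 0) t)
    (h0 : f 0 * exp (I 0) = S 0) {t : ℝ} (ht : 0 ≤ t) : f t * exp (I t) = S t := by
  have hfI : ∀ s ∈ Ici (0:ℝ),
      HasDerivWithinAt (fun s => f s * exp (I s)) (r s * exp (I s)) (Ici 0) s := fun s hs =>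
    ((hf s hs).mul (hI s hs).exp).congr_deriv (by ring)
  refine eq_of_has_deriv_right_eq (a := 0) (b := t)
    (fun s hs => (hfI s hs.1).mono (Ici_subset_Ici.2 hs.1))
    (fun s hs => (hS s hs.1).mono (Ici_subset_Ici.2 hs.1))
    (fun s hs => (hfI s hs.1).continuousWithinAt.mono Icc_subset_Ici_self)
    (fun s hs => (hS s hs.1).continuousWithinAt.mono Icc_subset_Ici_self) h0 t ⟨ht, le_rfl⟩

section Phi

variable (γ : ℕ → ℝ)

theorem continuous_phi : ∀ i k, Continuous (phi γ k i)
  | 0, _ => continuous_const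
  | i + 1, k => continuous_primitive
      (((continuous_phi i (k - 1)).mul (by fun_prop)).intervalIntegrable) 0

theorem phi_succ_succ_hasDerivAt (k i : ℕ) (t : ℝ) :
    HasDerivAt (phi γ (k + 1) (i + 1)) (phi γ k i t * exp ((γ k - γ (k + 1)) * t)) t :=
  ((continuous_phi γ i k).mul (by fun_prop)).integral_hasStrictDerivAt 0 t |>.hasDerivAt

theorem phi_succ_zero (k i : ℕ) : phi γ k (i + 1) 0 = 0 :=
  integral_same

variable (a : ℕ → ℝ)

noncomputable def phiSum (k : ℕ) (t : ℝ) : ℝ :=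
  ∑ i ∈ Finset.range (k - 1), a (k - i) * phi γ k i t

theorem phiSum_one : phiSum γ a 1 = 0 := by
  funext t; simp [phiSum]

theorem phiSum_zero {k : ℕ} (hk : 2 ≤ k) : phiSum γ a k 0 = a k := by
  rw [phiSum, Finset.sum_eq_single_of_mem 0 (Finset.mem_range.2 (by omega))]
  · simp [phi]
  · rintro (_ | i) _ hi
    · exact absurd rfl hi
    · rw [phi_succ_zero, mul_zero]

theorem phiSum_succ_hasDerivAt (k : ℕ) (t : ℝ) :
    HasDerivAt (phiSum γ a (k + 1)) (phiSum γ a k t * exp ((γ k - γ (k + 1)) * t)) t := by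
  rcases k with _ | k
  · rw [zero_add, phiSum_one, show phiSum γ a 0 t = 0 by simp [phiSum], zero_mul]
    exact hasDerivAt_const t 0
  have hsplit : phiSum γ a (k + 2) =
      fun s => (∑ j ∈ Finset.range k, a (k + 1 - j) * phi γ (k + 2) (j + 1) s) + a (k + 2) := by
    funext s
    rw [phiSum, show k + 2 - 1 = k + 1 by omega, Finset.sum_range_succ']
    simp only [phi, Nat.sub_zero, mul_one]
    congr 1
    exact Finset.sum_congr rfl fun j _ => by rw [show k + 2 - (j + 1) = k + 1 - j by omega]
  rw [hsplit, phiSum, show k + 1 - 1 = k by omega, Finset.sum_mul]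
  refine (HasDerivAt.fun_sum fun j _ => ?_).add_const _
  simpa only [mul_assoc] using (phi_succ_succ_hasDerivAt γ (k + 1) j t).const_mul (a (k + 1 - j))

end Phi

theorem IsSol.mul_exp_integral_eq_phiSum {K : ℕ} {γ : ℕ → ℝ} {a : ℕ → ℝ} {x : ℕ → ℝ → ℝ}
    (hx : IsSol K γ (fun _ => 0) a x) {k : ℕ} (hk : 1 ≤ k) (hkK : k ≤ K) {t : ℝ} (ht : 0 ≤ t) :
    (if k = 1 then 0 else x k t) * exp (∫ u in (0:ℝ)..t, (x 0 u - γ k)) = phiSum γ a k t := by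
  obtain ⟨hx_init, hx0, -, hxk⟩ := hx
  have hx0c : ContinuousOn (x 0) (Ici 0) := fun s hs => (hx0 s hs).continuousWithinAt
  induction k, hk using Nat.le_induction generalizing t with
  | base => simp [phiSum_one]
  | succ k hk ih =>
    rw [if_neg (by omega)]
    refine mul_exp_eq_of_hasDerivWithinAt (r := fun s => if k = 1 then 0 else x k s)
      (p := fun s => x 0 s - γ (k + 1)) (I := fun s => ∫ u in (0:ℝ)..s, (x 0 u - γ (k + 1)))
      (fun s hs => ?_)
      (fun s hs => hasDerivWithinAt_integral_Ici (hx0c.sub continuousOn_const) hs)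
      (fun s hs => ?_) ?_ ht
    · refine (hxk (k + 1) (by omega) hkK s hs).congr_deriv ?_
      simp only [show k + 1 = 2 ↔ k = 1 by omega, Nat.add_sub_cancel]
      ring
    · refine (phiSum_succ_hasDerivAt γ a k s).hasDerivWithinAt.congr_deriv ?_
      rw [integral_sub_const_eq_add _ ((hx0c.mono Icc_subset_Ici_self).intervalIntegrable_of_Icc hs)
        _ (γ k), sub_zero, exp_add, ← mul_assoc, ih (by omega) hs]
    · simp [hx_init, phiSum_zero γ a (show 2 ≤ k + 1 by omega)]

theorem ode_explicit_formula_general (K : ℕ) (γ : ℕ → ℝ)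
    (a : ℕ → ℝ)
    (x : ℕ → ℝ → ℝ) (hx : IsSol K γ (fun _ => 0) a x) :
    ∀ k, 2 ≤ k → k ≤ K → ∀ t ≥ (0:ℝ),
      x k t =
        (∑ i ∈ Finset.range (k - 1), a (k - i) * phi γ k i t) *
          Real.exp (-∫ u in (0:ℝ)..t, (x 0 u - γ k)) := by
  intro k hk hkK t ht
  have h := hx.mul_exp_integral_eq_phiSum (by omega : 1 ≤ k) hkK ht
  rw [if_neg (by omega)] at h
  rw [exp_neg, ← div_eq_mul_inv, eq_div_iff (exp_ne_zero _)]
  exact h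

/-- Explicit representation in the unforced case `y ≡ 0`: for `2 ≤ k ≤ K` and
`t ≥ 0`, `x_k(t) = (Σ_{i=0}^{k-2} x_{k-i}(0) φ_{k,i}(t)) e^{-∫₀ᵗ (x₀ - γ_k)}`. -/
theorem ode_explicit_formula (K : ℕ) (hK : 2 ≤ K) (γ : ℕ → ℝ)
    (a : ℕ → ℝ) (ha : ∀ k, 0 ≤ a k)
    (x : ℕ → ℝ → ℝ) (hx : IsSol K γ (fun _ => 0) a x) :
    ∀ k, 2 ≤ k → k ≤ K → ∀ t ≥ (0:ℝ),
      x k t =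
        (∑ i ∈ Finset.range (k - 1), a (k - i) * phi γ k i t) *
          Real.exp (-∫ u in (0:ℝ)..t, (x 0 u - γ k)) :=
  ode_explicit_formula_general K γ a x hx
end
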